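/- arXiv:math/0507510 — 5 statements merged into one kernel-verified Lean document; each statement's English description precedes it below -/
import Mathlib

section
/- Let $(x_1,y_1),\dots,(x_n,y_n)$ be $n$ points in $\mathbb{R}^2$ and let $x_{n+1} \in \mathbb{R}$ satisfy $\min_{1\le i\le n} x_i < x_{n+1} < \max_{1\le i\le n} x_i$. Then there exists $M > 0$ such that for every $y_{n+1} \in \mathbb{R}$ with $|y_{n+1}| > M$, every pair $(\beta_0,\beta_1) \in \mathbb{R}^2$ minimizing the function $F(\beta_0,\beta_1) = \sum_{i=1}^{n+1} |y_i - \beta_0 - \beta_1 x_i|$ satisfies $\beta_0 + \beta_1 x_{n+1} \ne y_{n+1}$, i.e., the LAD regression line does not pass through the point $(x_{n+1}, y_{n+1}).$ -/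
/-!
Let `x j` and `x k` be the smallest and largest abscissae. A line `ℓ` through `(x', y')` takes at
`x'` a convex combination of its values at `x j` and `x k`, with weights bounded by some
`ρ < 1` depending only on the abscissae; hence `|y'| ≤ ρ (|ℓ (x j)| + |ℓ (x k)|)`. Those two
values differ from `y j`, `y k` by residuals of the fit, and the residuals are controlled by
comparing with the zero line: `∑ |residual| ≤ ∑ |y i| + |y'|`. So `(1 - ρ) |y'|` is bounded
in terms of the `y i` alone, which fails once `|y'|` is large.
-/

section AffineInterpolation

variable {a t b : ℝ}

theorem abs_affine_le_interpolation (hat : a ≤ t) (htb : t ≤ b) (β0 β1 : ℝ) :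
    (b - a) * |β0 + β1 * t| ≤ (b - t) * |β0 + β1 * a| + (t - a) * |β0 + β1 * b| := by
  have hinterp : (b - a) * (β0 + β1 * t) = (b - t) * (β0 + β1 * a) + (t - a) * (β0 + β1 * b) := by
    ring
  calc (b - a) * |β0 + β1 * t| = |(b - a) * (β0 + β1 * t)| := by
        rw [abs_mul, abs_of_nonneg (by linarith : 0 ≤ b - a)]
    _ ≤ |(b - t) * (β0 + β1 * a)| + |(t - a) * (β0 + β1 * b)| := hinterp ▸ abs_add_le _ _
    _ = (b - t) * |β0 + β1 * a| + (t - a) * |β0 + β1 * b| := by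
        rw [abs_mul, abs_mul, abs_of_nonneg (by linarith : 0 ≤ b - t),
          abs_of_nonneg (by linarith : 0 ≤ t - a)]

theorem abs_affine_le_max_div_mul (hat : a ≤ t) (htb : t ≤ b) (hab : a < b) (β0 β1 : ℝ) :
    |β0 + β1 * t| ≤ max (t - a) (b - t) / (b - a) * (|β0 + β1 * a| + |β0 + β1 * b|) := by
  rw [div_mul_eq_mul_div, le_div_iff₀ (by linarith), mul_comm]
  calc (b - a) * |β0 + β1 * t|
      ≤ (b - t) * |β0 + β1 * a| + (t - a) * |β0 + β1 * b| :=
        abs_affine_le_interpolation hat htb β0 β1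
    _ ≤ max (t - a) (b - t) * (|β0 + β1 * a| + |β0 + β1 * b|) := by
        rw [mul_add]
        gcongr
        exacts [le_max_right _ _, le_max_left _ _]

theorem max_sub_div_sub_lt_one (hat : a < t) (htb : t < b) :
    max (t - a) (b - t) / (b - a) < 1 := by
  rw [div_lt_one (by linarith)]
  exact max_lt (by linarith) (by linarith)

end AffineInterpolation

theorem abs_add_abs_le_add_sum_abs_sub {ι : Type*} [Fintype ι] (x y : ι → ℝ) (β0 β1 : ℝ)
    {j k : ι} (hjk : j ≠ k) :
    |β0 + β1 * x j| + |β0 + β1 * x k| ≤ |y j| + |y k| + ∑ i, |y i - β0 - β1 * x i| := by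
  have hvalue (i : ι) : |β0 + β1 * x i| ≤ |y i| + |y i - β0 - β1 * x i| :=
    calc |β0 + β1 * x i| = |y i - (y i - β0 - β1 * x i)| := by congr 1; ring
      _ ≤ |y i| + |y i - β0 - β1 * x i| := abs_sub _ _
  have hpair : |y j - β0 - β1 * x j| + |y k - β0 - β1 * x k| ≤ ∑ i, |y i - β0 - β1 * x i| :=
    Finset.add_le_sum (f := fun i => |y i - β0 - β1 * x i|) (fun _ _ => abs_nonneg _)
      (Finset.mem_univ j) (Finset.mem_univ k) hjk
  linarith [hvalue j, hvalue k]

/-- If `x'` lies strictly between the min and max of the `x i`, then for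
sufficiently large `|y'|`, every LAD regression line for the augmented data set
(points `(x i, y i)` together with `(x', y')`) does not pass through `(x', y')`. -/
theorem lad_line_misses_vertical_outlier
    (n : ℕ) (hn : 0 < n) (x y : Fin n → ℝ) (x' : ℝ)
    (hlo : Finset.univ.inf' (@Finset.univ_nonempty (Fin n) _ (Fin.pos_iff_nonempty.mp hn)) x < x')
    (hhi : x' < Finset.univ.sup' (@Finset.univ_nonempty (Fin n) _ (Fin.pos_iff_nonempty.mp hn)) x) :
    ∃ M > 0, ∀ y' : ℝ, M < |y'| →
      ∀ β0 β1 : ℝ,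
        (∀ b0 b1 : ℝ,
          (∑ i, |y i - β0 - β1 * x i|) + |y' - β0 - β1 * x'| ≤
            (∑ i, |y i - b0 - b1 * x i|) + |y' - b0 - b1 * x'|) →
        β0 + β1 * x' ≠ y' := by
  obtain ⟨j, -, hj⟩ := Finset.exists_mem_eq_inf' _ x
  obtain ⟨k, -, hk⟩ := Finset.exists_mem_eq_sup' _ x
  rw [hj] at hlo
  rw [hk] at hhi
  have hjk : j ≠ k := fun h => by rw [h] at hlo; linarith
  set ρ := max (x' - x j) (x k - x') / (x k - x j)
  have hρ : ρ < 1 := max_sub_div_sub_lt_one hlo hhi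
  have hρ0 : 0 ≤ ρ := div_nonneg (le_max_of_le_left (by linarith)) (by linarith)
  set T := ∑ i, |y i| + |y j| + |y k|
  have hT : 0 ≤ T := by positivity
  refine ⟨(T + 1) / (1 - ρ), by apply div_pos <;> linarith, fun y' hy' β0 β1 hmin hthrough => ?_⟩
  have hfit : ∑ i, |y i - β0 - β1 * x i| ≤ ∑ i, |y i| + |y'| := by
    simpa [← hthrough] using hmin 0 0
  have hends := abs_add_abs_le_add_sum_abs_sub x y β0 β1 hjk
  have hinterp := abs_affine_le_max_div_mul hlo.le hhi.le (hlo.trans hhi) β0 β1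
  rw [hthrough] at hinterp
  have hbound : (1 - ρ) * |y'| ≤ T := by
    nlinarith [mul_le_mul_of_nonneg_left (hends.trans (by linarith : _ ≤ T + |y'|)) hρ0,
      mul_nonneg (sub_nonneg.2 hρ.le) hT]
  rw [div_lt_iff₀ (by linarith)] at hy'
  linarith
end

section
/- Let $p \ge 1$ and let $(x_{11},\dots,x_{1p},y_1),\dots,(x_{n1},\dots,x_{np},y_n)$ be $n$ points in $\mathbb{R}^{p+1}$. Let $(x_{n+1,1},\dots,x_{n+1,p}) \in \mathbb{R}^p$ belong to the interior of the convex hull of the set $\{(x_{11},\dots,x_{1p}),\dots,(x_{n1},\dots,x_{np})\}$. Then there exists $M > 0$ such that for every $y_{n+1} \in \mathbb{R}$ with $|y_{n+1}| > M$, every vector $(\beta_0,\beta_1,\dots,\beta_p) \in \mathbb{R}^{p+1}$ minimizing $F(\beta_0,\dots,\beta_p) = \sum_{i=1}^{n+1} |y_i - \beta_0 - \sum_{j=1}^{p} \beta_j x_{ij}|$ satisfies $\beta_0 + \sum_{j=1}^{p} \beta_j x_{n+1,j} \ne y_{n+1}$, i.e., the LAD regression hyperplane does not pass through the point $(x_{n+1,1},\dots,x_{n+1,p},y_{n+1}).$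 -/
/-- Extract convex weights for a point of the convex hull of a finite family. -/
lemma lad_exists_weights {n p : ℕ} {x : Fin n → Fin p → ℝ} {z : Fin p → ℝ}
    (hz : z ∈ convexHull ℝ (Set.range x)) :
    ∃ μ : Fin n → ℝ, (∀ i, 0 ≤ μ i) ∧ (∑ i, μ i = 1) ∧
      (∀ j, ∑ i, μ i * x i j = z j) := by
  rw [convexHull_range_eq_exists_affineCombination] at hz
  obtain ⟨s, w, hw0, hw1, hcomb⟩ := hz
  refine ⟨fun i => if i ∈ s then w i else 0, ?_, ?_, ?_⟩
  · intro i; by_cases hi : i ∈ s <;> simp [hi, hw0 i]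
  · rw [Finset.sum_ite_mem, Finset.univ_inter, hw1]
  · intro j
    have h1 : s.affineCombination ℝ x w = ∑ i ∈ s, w i • x i :=
      Finset.affineCombination_eq_linear_combination s x w hw1
    have h2 : z j = ∑ i ∈ s, w i * x i j := by
      rw [← hcomb, h1]
      simp [Finset.sum_apply]
    rw [h2]
    simp only [ite_mul, zero_mul]
    rw [Finset.sum_ite_mem, Finset.univ_inter]

/-- If the explanatory part `x'` of an additional point lies in the interior
of the convex hull of the explanatory parts of `n` given points in `ℝ^(p+1)`, then for
sufficiently large `|y'|`, every LAD regression hyperplane for the augmented data set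
does not pass through the point `(x', y')`. -/
theorem lad_hyperplane_misses_vertical_outlier
    (p n : ℕ) (hp : 1 ≤ p) (x : Fin n → Fin p → ℝ) (y : Fin n → ℝ)
    (x' : Fin p → ℝ) (hx' : x' ∈ interior (convexHull ℝ (Set.range x))) :
    ∃ M > 0, ∀ y' : ℝ, M < |y'| →
      ∀ (β0 : ℝ) (β : Fin p → ℝ),
        (∀ (b0 : ℝ) (b : Fin p → ℝ),
          (∑ i, |y i - β0 - ∑ j, β j * x i j|) + |y' - β0 - ∑ j, β j * x' j| ≤
            (∑ i, |y i - b0 - ∑ j, b j * x i j|) + |y' - b0 - ∑ j, b j * x' j|) →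
        β0 + ∑ j, β j * x' j ≠ y' := by
  obtain ⟨ε, hε, hball⟩ : ∃ ε > 0, Metric.ball x' ε ⊆ convexHull ℝ (Set.range x) :=
    Metric.mem_nhds_iff.mp (mem_interior_iff_mem_nhds.mp hx')
  set δ := ε / 2 with hδdef
  have hδ : 0 < δ := by positivity
  -- generic membership fact: any perturbation of sup-norm ≤ δ stays in the hull
  have hmem : ∀ w : Fin p → ℝ, (∀ j, |w j| ≤ δ) → x' + w ∈ convexHull ℝ (Set.range x) := by
    intro w hw
    apply hball
    rw [Metric.mem_ball, dist_eq_norm, add_sub_cancel_left]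
    have : ‖w‖ ≤ δ := by
      rw [pi_norm_le_iff_of_nonneg hδ.le]
      intro j; simpa using hw j
    linarith
  -- n ≥ 2
  have hn2 : 2 ≤ n := by
    by_contra hcon
    push_neg at hcon
    interval_cases n
    · have : (Set.range x) = (∅ : Set (Fin p → ℝ)) := by
        simp [Set.range_eq_empty]
      rw [this] at hx'
      simp at hx'
    · have hr : Set.range x = {x 0} := Set.range_unique
      set e : Fin p → ℝ := fun j => if j = ⟨0, hp⟩ then δ else 0 with he
      have he1 : ∀ j, |e j| ≤ δ := by
        intro j; by_cases hj : j = ⟨0, hp⟩ <;> simp [he, hj, abs_of_nonneg hδ.le, hδ.le]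
      have h1 := hmem e he1
      have h2 := hmem (-e) (by intro j; simpa using he1 j)
      rw [hr, convexHull_singleton] at h1 h2
      have : x' + e = x' + -e := by
        rw [Set.mem_singleton_iff.mp h1, Set.mem_singleton_iff.mp h2]
      have he0 : e ⟨0, hp⟩ = 0 := by
        have := congrFun this ⟨0, hp⟩
        simp at this
        linarith [this]
      simp [he] at he0
      linarith
  set A := ∑ i, |y i| with hA
  set C := ∑ i, ∑ j, |x i j - x' j| with hC
  have hA0 : 0 ≤ A := Finset.sum_nonneg fun i _ => abs_nonneg _
  have hC0 : 0 ≤ C := Finset.sum_nonneg fun i _ => Finset.sum_nonneg fun j _ => abs_nonneg _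
  refine ⟨2 * A + 2 * C * A / δ + 1, by positivity, ?_⟩
  intro y' hy' β0 β hmin hc
  -- hc : β0 + ∑ j, β j * x' j = y'
  set a : Fin n → ℝ := fun i => ∑ j, β j * (x i j - x' j) with ha
  set S := ∑ j, |β j| with hS
  have hS0 : 0 ≤ S := Finset.sum_nonneg fun j _ => abs_nonneg _
  -- rewrite the minimizer's objective
  have hres : ∀ i, y i - β0 - ∑ j, β j * x i j = y i - y' - a i := by
    intro i
    have h1 : a i = (∑ j, β j * x i j) - ∑ j, β j * x' j := by
      simp [ha, mul_sub, Finset.sum_sub_distrib]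
    rw [← hc, h1]; ring
  have hF : (∑ i, |y i - β0 - ∑ j, β j * x i j|) + |y' - β0 - ∑ j, β j * x' j|
      = ∑ i, |y i - y' - a i| := by
    have h2 : y' - β0 - ∑ j, β j * x' j = 0 := by rw [← hc]; ring
    rw [h2, abs_zero, add_zero]
    exact Finset.sum_congr rfl fun i _ => by rw [hres i]
  -- minimality vs the zero hyperplane
  have h0 : ∑ i, |y i - y' - a i| ≤ A + |y'| := by
    have := hmin 0 0
    rw [hF] at this
    simpa [hA] using this
  -- the perturbation u in the direction of the signs of β
  set u : Fin p → ℝ := fun j => δ * (if 0 ≤ β j then 1 else -1) with hu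
  have hu1 : ∀ j, |u j| ≤ δ := by
    intro j; by_cases hj : 0 ≤ β j <;> simp [hu, hj, abs_of_nonneg hδ.le]
  have hβu : ∀ j, β j * u j = δ * |β j| := by
    intro j
    by_cases hj : 0 ≤ β j
    · simp [hu, hj, abs_of_nonneg hj]; ring
    · push_neg at hj
      simp [hu, not_le.mpr hj, abs_of_neg hj]; ring
  -- given weights realizing x' + w, compute ∑ μ i * a i
  have hkey : ∀ (w : Fin p → ℝ) (μ : Fin n → ℝ), (∑ i, μ i = 1) →
      (∀ j, ∑ i, μ i * x i j = x' j + w j) → ∑ i, μ i * a i = ∑ j, β j * w j := by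
    intro w μ hμ1 hμc
    calc ∑ i, μ i * a i = ∑ i, ∑ j, β j * (μ i * (x i j - x' j)) := by
          refine Finset.sum_congr rfl fun i _ => ?_
          rw [ha, Finset.mul_sum]
          exact Finset.sum_congr rfl fun j _ => by ring
      _ = ∑ j, β j * (∑ i, μ i * (x i j - x' j)) := by
          rw [Finset.sum_comm]
          exact Finset.sum_congr rfl fun j _ => by rw [Finset.mul_sum]
      _ = ∑ j, β j * w j := by
          refine Finset.sum_congr rfl fun j _ => ?_
          congr 1
          have : ∑ i, μ i * (x i j - x' j) = (∑ i, μ i * x i j) - (∑ i, μ i) * x' j := by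
            rw [Finset.sum_mul, ← Finset.sum_sub_distrib]
            exact Finset.sum_congr rfl fun i _ => by ring
          rw [this, hμ1, hμc j]; ring
  -- generic lower bound from convex weights
  have hlow : ∀ (w : Fin p → ℝ), (∀ j, |w j| ≤ δ) →
      |y' + ∑ j, β j * w j| ≤ ∑ i, |y' + a i| := by
    intro w hw
    obtain ⟨μ, hμ0, hμ1, hμc⟩ := lad_exists_weights (hmem w hw)
    have hsum : ∑ i, μ i * (y' + a i) = y' + ∑ j, β j * w j := by
      have : ∑ i, μ i * (y' + a i) = (∑ i, μ i) * y' + ∑ i, μ i * a i := by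
        rw [Finset.sum_mul, ← Finset.sum_add_distrib]
        exact Finset.sum_congr rfl fun i _ => by ring
      rw [this, hμ1, hkey w μ hμ1 (fun j => by rw [hμc j]; simp), one_mul]
    calc |y' + ∑ j, β j * w j| = |∑ i, μ i * (y' + a i)| := by rw [hsum]
      _ ≤ ∑ i, |μ i * (y' + a i)| := Finset.abs_sum_le_sum_abs _ _
      _ ≤ ∑ i, |y' + a i| := by
          refine Finset.sum_le_sum fun i _ => ?_
          rw [abs_mul, abs_of_nonneg (hμ0 i)]
          have hμle : μ i ≤ 1 := by
            rw [← hμ1]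
            exact Finset.single_le_sum (fun k _ => hμ0 k) (Finset.mem_univ i)
          nlinarith [abs_nonneg (y' + a i)]
  have hbu : ∑ j, β j * u j = δ * S := by
    rw [hS, Finset.mul_sum]
    exact Finset.sum_congr rfl fun j _ => hβu j
  -- |y'| + δ S ≤ ∑ |y' + a i|
  have hG : |y'| + δ * S ≤ ∑ i, |y' + a i| := by
    rcases le_total 0 y' with h | h
    · have h1 := hlow u hu1
      rw [hbu] at h1
      have : |y' + δ * S| = |y'| + δ * S := by
        rw [abs_of_nonneg (by positivity), abs_of_nonneg h]
      linarith [this ▸ h1]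
    · have h1 := hlow (-u) (by intro j; simpa using hu1 j)
      have : ∑ j, β j * (-u) j = -(δ * S) := by
        rw [← hbu, ← Finset.sum_neg_distrib]
        exact Finset.sum_congr rfl fun j _ => by simp
      rw [this] at h1
      have h2 : |y' + -(δ * S)| = |y'| + δ * S := by
        rw [abs_of_nonpos (by nlinarith), abs_of_nonpos h]; ring
      linarith [h2 ▸ h1]
  -- first consequence: S is bounded
  have hSb : δ * S ≤ 2 * A := by
    have h1 : ∑ i, (|y' + a i| - |y i|) ≤ ∑ i, |y i - y' - a i| := by
      refine Finset.sum_le_sum fun i _ => ?_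
      have := abs_sub_abs_le_abs_sub (y' + a i) (y i)
      have h2 : |y' + a i - y i| = |y i - y' - a i| := by rw [← abs_neg]; ring_nf
      linarith
    rw [Finset.sum_sub_distrib] at h1
    have := h0
    linarith [hG]
  -- bound on sum of |a i|
  have haC : ∑ i, |a i| ≤ S * C := by
    have h1 : ∀ i, |a i| ≤ ∑ j, S * |x i j - x' j| := by
      intro i
      calc |a i| ≤ ∑ j, |β j * (x i j - x' j)| := Finset.abs_sum_le_sum_abs _ _
        _ ≤ ∑ j, S * |x i j - x' j| := by
            refine Finset.sum_le_sum fun j _ => ?_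
            rw [abs_mul]
            have : |β j| ≤ S :=
              Finset.single_le_sum (fun k (_ : k ∈ Finset.univ) => abs_nonneg (β k))
                (Finset.mem_univ j)
            nlinarith [abs_nonneg (x i j - x' j)]
    calc ∑ i, |a i| ≤ ∑ i, ∑ j, S * |x i j - x' j| := Finset.sum_le_sum fun i _ => h1 i
      _ = S * C := by
            rw [hC, Finset.mul_sum]
            exact Finset.sum_congr rfl fun i _ => by rw [Finset.mul_sum]
  -- second consequence: n |y'| - A - S C ≤ A + |y'|
  have hbig : (n : ℝ) * |y'| - A - S * C ≤ A + |y'| := by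
    have h1 : ∑ i, (|y'| - |y i| - |a i|) ≤ ∑ i, |y i - y' - a i| := by
      refine Finset.sum_le_sum fun i _ => ?_
      have h2 : |y'| ≤ |y i - y' - a i| + |y i| + |a i| := by
        have := abs_sub (y i - y' - a i + a i) (y i)
        have h3 : |y i - y' - a i + a i - y i| = |y'| := by rw [← abs_neg]; ring_nf
        calc |y'| = |(y i - y' - a i) + a i - y i| := by rw [← h3]
          _ ≤ |y i - y' - a i + a i| + |y i| := abs_sub _ _
          _ ≤ (|y i - y' - a i| + |a i|) + |y i| := by linarith [abs_add_le (y i - y' - a i) (a i)]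
          _ = |y i - y' - a i| + |y i| + |a i| := by ring
      linarith
    rw [Finset.sum_sub_distrib, Finset.sum_sub_distrib, Finset.sum_const, Finset.card_univ,
      Fintype.card_fin, nsmul_eq_mul] at h1
    linarith [haC, h0]
  -- finish
  have hy'b : |y'| ≤ 2 * A + S * C := by
    have hn2' : (2 : ℝ) ≤ (n : ℝ) := by exact_mod_cast hn2
    have : (2 : ℝ) * |y'| ≤ (n : ℝ) * |y'| := by nlinarith [abs_nonneg y']
    linarith
  have hSC : S * C ≤ 2 * C * A / δ := by
    rw [le_div_iff₀ hδ]
    calc S * C * δ = (δ * S) * C := by ring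
      _ ≤ (2 * A) * C := mul_le_mul_of_nonneg_right hSb hC0
      _ = 2 * C * A := by ring
  linarith
end

section
/- Let $(x_1,y_1),\dots,(x_n,y_n)$ be points in $\mathbb{R}^2$, let $a = \min_{1\le i\le n} x_i$ and $b = \max_{1\le i \le n} x_i$ with $a < b$, and let $x_{n+1} \in (a, b)$. Then there exist a constant $\alpha > 1$ and $M > 0$ such that for every $y_{n+1}$ with $|y_{n+1}| > M$, every line $y = \beta_0^* + \beta_1^* x$ that passes through $(x_{n+1}, y_{n+1})$ and also through some point $(x_i, y_i)$ with $x_i \ne x_{n+1}$ satisfies $F(\beta_0^*, \beta_1^*) > \alpha |y_{n+1}|$, where $F(\beta_0,\beta_1) = \sum_{i=1}^{n+1} |y_i - \beta_0 - \beta_1 x_i|$. -/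
set_option maxHeartbeats 1000000


/-- With `a`, `b` the min and max of the `x i`, `a < b`, and `x' ∈ (a, b)`,
there exist `α > 1` and `M > 0` such that whenever `|y'| > M`, every line passing through
`(x', y')` and through some data point `(x i, y i)` with `x i ≠ x'` has sum of absolute
deviations (over the augmented data set) exceeding `α |y'|`. -/
theorem lad_objective_large_through_far_point
    (n : ℕ) (x y : Fin n → ℝ) (hne : (Finset.univ : Finset (Fin n)).Nonempty)
    (a b : ℝ) (ha : a = Finset.univ.inf' hne x) (hb : b = Finset.univ.sup' hne x)
    (hab : a < b) (x' : ℝ) (hx'a : a < x') (hx'b : x' < b) :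
    ∃ α > 1, ∃ M > 0, ∀ y' : ℝ, M < |y'| →
      ∀ β0 β1 : ℝ, y' = β0 + β1 * x' →
        (∃ i, x i ≠ x' ∧ y i = β0 + β1 * x i) →
        α * |y'| < (∑ i, |y i - β0 - β1 * x i|) + |y' - β0 - β1 * x'| := by
  classical
  have i0 : Fin n := hne.choose
  set Y := Finset.univ.sup' hne (fun k => |y k|) with hY
  have hYle : ∀ k, |y k| ≤ Y := fun k => by rw [hY]; exact Finset.le_sup' (fun k => |y k|) (Finset.mem_univ k)
  have hY0 : 0 ≤ Y := le_trans (abs_nonneg _) (hYle i0)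
  set d := min (x' - a) (b - x') with hd
  have hd0 : 0 < d := lt_min (by linarith) (by linarith)
  have hba : (0:ℝ) < b - a := by linarith
  set t0 := d / (b - a) with ht0
  have ht00 : 0 < t0 := div_pos hd0 hba
  refine ⟨1 + t0 / 2, by linarith, 1 + (2 * (1 + t0) / t0) * Y, by positivity, ?_⟩
  intro y' hMy β0 β1 hy' ⟨i, hix, hiy⟩
  obtain ⟨ja, -, hja⟩ := Finset.exists_mem_eq_inf' hne x
  obtain ⟨jb, -, hjb⟩ := Finset.exists_mem_eq_sup' hne x
  have hxa : ∀ k, a ≤ x k := fun k => ha ▸ Finset.inf'_le _ (Finset.mem_univ k)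
  have hxb : ∀ k, x k ≤ b := fun k => hb ▸ Finset.le_sup' _ (Finset.mem_univ k)
  have hne' : x' - x i ≠ 0 := sub_ne_zero.mpr (Ne.symm hix)
  have hβ : β1 * (x' - x i) = y' - y i := by rw [hy', hiy]; ring
  -- the big bound on |y'| gives |y'| > Y
  have hcoef : (1:ℝ) ≤ 2 * (1 + t0) / t0 := by
    rw [le_div_iff₀ ht00]; nlinarith
  have hy'Y : Y < |y'| := by nlinarith [hMy, mul_le_mul_of_nonneg_right hcoef hY0]
  have key : ∀ j : Fin n, t0 ≤ (x j - x') / (x' - x i) →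
      (1 + t0 / 2) * |y'| < (∑ k, |y k - β0 - β1 * x k|) + |y' - β0 - β1 * x'| := by
    intro j ht
    set t := (x j - x') / (x' - x i) with htdef
    have ht0t : 0 < t := lt_of_lt_of_le ht00 ht
    have htx : t * (x' - x i) = x j - x' := div_mul_cancel₀ _ hne'
    have h1 : β1 * (x j - x') = t * (y' - y i) := by
      rw [← htx]; linear_combination t * hβ
    have hdev : y j - β0 - β1 * x j = (y j + t * y i) - (1 + t) * y' := by
      linear_combination hy' - h1
    have habs : (1 + t) * |y'| - |y j| - t * |y i| ≤ |y j - β0 - β1 * x j| := by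
      rw [hdev]
      have h2 : |(1 + t) * y'| - |y j + t * y i| ≤ |(y j + t * y i) - (1 + t) * y'| := by
        rw [abs_sub_comm]; exact abs_sub_abs_le_abs_sub _ _
      have h3 : |(1 + t) * y'| = (1 + t) * |y'| := by
        rw [abs_mul, abs_of_pos (by linarith : (0:ℝ) < 1 + t)]
      have h4 : |y j + t * y i| ≤ |y j| + t * |y i| := by
        calc |y j + t * y i| ≤ |y j| + |t * y i| := abs_add_le _ _
          _ = |y j| + t * |y i| := by rw [abs_mul, abs_of_pos ht0t]
      linarith
    have h5 : (1 + t0) * (|y'| - Y) ≤ (1 + t) * |y'| - |y j| - t * |y i| := by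
      have hYj := hYle j
      have hYi := hYle i
      nlinarith [mul_le_mul_of_nonneg_right ht (le_of_lt (sub_pos.mpr hy'Y))]
    have h6 : (1 + t0 / 2) * |y'| < (1 + t0) * (|y'| - Y) := by
      have hfs : 2 * (1 + t0) / t0 * Y * t0 = 2 * (1 + t0) * Y := by
        field_simp
      nlinarith [mul_lt_mul_of_pos_right hMy ht00]
    have hsum : |y j - β0 - β1 * x j| ≤ ∑ k, |y k - β0 - β1 * x k| :=
      Finset.single_le_sum (f := fun k => |y k - β0 - β1 * x k|) (fun k _ => abs_nonneg _) (Finset.mem_univ j)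
    linarith [abs_nonneg (y' - β0 - β1 * x')]
  rcases lt_or_gt_of_ne hix with hc | hc
  · -- x i < x', use jb with x jb = b
    refine key jb ?_
    have hxjb : x jb = b := hjb.symm.trans hb.symm
    have hpos : 0 < x' - x i := by linarith
    rw [hxjb, ht0, div_le_div_iff₀ hba hpos]
    have h1 : d ≤ b - x' := min_le_right _ _
    have h2 : x' - x i ≤ b - a := by have := hxa i; linarith
    nlinarith [mul_le_mul h1 h2 (by linarith) (by linarith : (0:ℝ) ≤ b - x')]
  · -- x' < x i, use ja with x ja = a
    refine key ja ?_
    have hxja : x ja = a := hja.symm.trans ha.symm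
    have hpos : 0 < x i - x' := by linarith
    have heq : (x ja - x') / (x' - x i) = (x' - x ja) / (x i - x') := by
      rw [div_eq_div_iff hne' (ne_of_gt hpos)]; ring
    rw [heq, hxja, ht0, div_le_div_iff₀ hba hpos]
    have h1 : d ≤ x' - a := min_le_left _ _
    have h2 : x i - x' ≤ b - a := by have := hxb i; linarith
    nlinarith [mul_le_mul h1 h2 (by linarith) (by linarith : (0:ℝ) ≤ x' - a)]
end

section
/- Let $(x_1,y_1),\dots,(x_n,y_n)$ be $n$ points in $\mathbb{R}^2$ and let $y_{n+1} \in \mathbb{R}$ be fixed. Then there exists $M > 0$ such that for every $x_{n+1}$ with $|x_{n+1}| > M$, there exists a pair $(\beta_0,\beta_1) \in \mathbb{R}^2$ minimizing $F(\beta_0,\beta_1) = \sum_{i=1}^{n+1} |y_i - \beta_0 - \beta_1 x_i|$ over $\mathbb{R}^2$ that satisfies $\beta_0 + \beta_1 x_{n+1} = y_{n+1}$, i.e., a LAD regression line passes through the added point $(x_{n+1}, y_{n+1}).$ -/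
open Finset

lemma my_exists_min (n : ℕ) (a c : Fin n → ℝ) (hc : ∀ i, 1 ≤ |c i|) :
    ∃ t₀ : ℝ, ∀ t : ℝ, (∑ i, |a i - t₀ * c i|) ≤ ∑ i, |a i - t * c i| := by
  rcases Nat.eq_zero_or_pos n with h | hn
  · subst h; exact ⟨0, fun t => by simp⟩
  set S : ℝ := ∑ i, |a i| with hS
  have hS0 : 0 ≤ S := Finset.sum_nonneg fun i _ => abs_nonneg _
  have hcont : Continuous fun t : ℝ => ∑ i, |a i - t * c i| :=
    continuous_finset_sum _ fun i _ =>
      (continuous_const.sub (continuous_id.mul continuous_const)).abs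
  obtain ⟨t₀, ht₀mem, ht₀⟩ :=
    (isCompact_Icc (a := -(2*S+1)) (b := 2*S+1)).exists_isMinOn
      ⟨0, by constructor <;> linarith⟩ hcont.continuousOn
  refine ⟨t₀, fun t => ?_⟩
  by_cases ht : t ∈ Set.Icc (-(2*S+1)) (2*S+1)
  · exact ht₀ ht
  · have ht0 : (∑ i, |a i - t₀ * c i|) ≤ S := by
      calc (∑ i, |a i - t₀ * c i|) ≤ ∑ i, |a i - 0 * c i| :=
            ht₀ ⟨by linarith, by linarith⟩
        _ = S := by simp [hS]
    have habs : 2*S+1 < |t| := by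
      simp only [Set.mem_Icc, not_and_or, not_le] at ht
      rcases ht with h | h
      · rw [abs_of_neg (by linarith)]; linarith
      · rw [abs_of_pos (by linarith)]; linarith
    have hlow : ∀ i : Fin n, |t| - |a i| ≤ |a i - t * c i| := by
      intro i
      have h1 : |t * c i| - |a i| ≤ |a i - t * c i| := by
        have := abs_sub_abs_le_abs_sub (t * c i) (a i)
        rw [abs_sub_comm] at this; linarith
      have h2 : |t| ≤ |t * c i| := by
        rw [abs_mul]
        nlinarith [hc i, abs_nonneg t]
      linarith
    have hsum : (n : ℝ) * |t| - S ≤ ∑ i, |a i - t * c i| := by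
      calc (n : ℝ) * |t| - S = ∑ i : Fin n, (|t| - |a i|) := by
            rw [Finset.sum_sub_distrib, Finset.sum_const, card_univ, Fintype.card_fin]
            simp [hS, nsmul_eq_mul]
        _ ≤ _ := Finset.sum_le_sum fun i _ => hlow i
    have hn1 : (1:ℝ) ≤ (n:ℝ) := by exact_mod_cast hn
    nlinarith [abs_nonneg t]

/-- For fixed `y'`, if `|x'|` is sufficiently large then some LAD regression
line for the augmented data set (points `(x i, y i)` together with `(x', y')`) passes
through the added point `(x', y')`. -/
theorem lad_line_through_horizontal_leverage_point
    (n : ℕ) (x y : Fin n → ℝ) (y' : ℝ) :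
    ∃ M > 0, ∀ x' : ℝ, M < |x'| →
      ∃ β0 β1 : ℝ,
        (∀ b0 b1 : ℝ,
          (∑ i, |y i - β0 - β1 * x i|) + |y' - β0 - β1 * x'| ≤
            (∑ i, |y i - b0 - b1 * x i|) + |y' - b0 - b1 * x'|) ∧
        β0 + β1 * x' = y' := by
  have hsx : 0 ≤ ∑ i, |x i| := Finset.sum_nonneg fun i _ => abs_nonneg _
  refine ⟨(∑ i, |x i|) + 1, by linarith, fun x' hx' => ?_⟩
  have hx'pos : 0 < |x'| := by linarith
  have hx'ne : x' ≠ 0 := fun h => by rw [h, abs_zero] at hx'pos; exact lt_irrefl 0 hx'pos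
  have hc : ∀ i : Fin n, 1 ≤ |x i - x'| := by
    intro i
    have h1 : |x i| ≤ ∑ j, |x j| :=
      Finset.single_le_sum (f := fun j => |x j|) (fun j _ => abs_nonneg _) (mem_univ i)
    have h2 := abs_sub_abs_le_abs_sub x' (x i)
    rw [abs_sub_comm] at h2
    linarith
  obtain ⟨t₀, ht₀⟩ := my_exists_min n (fun i => y i - y') (fun i => x i - x') hc
  refine ⟨y' - t₀ * x', t₀, fun b0 b1 => ?_, by ring⟩
  set r := y' - b0 - b1 * x' with hr
  have key1 : (∑ i, |y i - (y' - t₀ * x') - t₀ * x i|) + |y' - (y' - t₀ * x') - t₀ * x'|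
      = ∑ i, |(y i - y') - t₀ * (x i - x')| := by
    rw [show y' - (y' - t₀ * x') - t₀ * x' = 0 by ring, abs_zero, add_zero]
    exact Finset.sum_congr rfl fun i _ => by congr 1; ring
  have key2 : (∑ i, |(y i - y') - (b1 + r / x') * (x i - x')|) ≤
      (∑ i, |y i - b0 - b1 * x i|) + |r| := by
    have hterm : ∀ i : Fin n,
        |(y i - y') - (b1 + r / x') * (x i - x')| ≤
          |y i - b0 - b1 * x i| + |r| / |x'| * |x i| := by
      intro i
      have heq : (y i - y') - (b1 + r / x') * (x i - x')
          = (y i - b0 - b1 * x i) - (r / x') * x i := by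
        field_simp [hr]
        ring
      rw [heq]
      calc |(y i - b0 - b1 * x i) - (r / x') * x i|
          ≤ |y i - b0 - b1 * x i| + |(r / x') * x i| := abs_sub _ _
        _ = |y i - b0 - b1 * x i| + |r| / |x'| * |x i| := by
            rw [abs_mul, abs_div]
    calc (∑ i, |(y i - y') - (b1 + r / x') * (x i - x')|)
        ≤ ∑ i, (|y i - b0 - b1 * x i| + |r| / |x'| * |x i|) :=
          Finset.sum_le_sum fun i _ => hterm i
      _ = (∑ i, |y i - b0 - b1 * x i|) + |r| / |x'| * ∑ i, |x i| := by
          rw [Finset.sum_add_distrib, Finset.mul_sum]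
      _ ≤ (∑ i, |y i - b0 - b1 * x i|) + |r| := by
          have h1 : (∑ i, |x i|) ≤ |x'| := by linarith
          have h2 : |r| / |x'| * (∑ i, |x i|) ≤ |r| := by
            rw [div_mul_eq_mul_div, div_le_iff₀ hx'pos]
            have := abs_nonneg r
            nlinarith
          linarith
  calc (∑ i, |y i - (y' - t₀ * x') - t₀ * x i|) + |y' - (y' - t₀ * x') - t₀ * x'|
      = ∑ i, |(y i - y') - t₀ * (x i - x')| := key1
    _ ≤ ∑ i, |(y i - y') - (b1 + r / x') * (x i - x')| := ht₀ _
    _ ≤ (∑ i, |y i - b0 - b1 * x i|) + |r| := key2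
end

section
/- Let $p \ge 1$, let $(x_{11},\dots,x_{1p},y_1),\dots,(x_{n1},\dots,x_{np},y_n)$ be $n$ points in $\mathbb{R}^{p+1}$, and let $y_{n+1} \in \mathbb{R}$ be fixed. Then there exists $M > 0$ such that for every $(x_{n+1,1},\dots,x_{n+1,p}) \in \mathbb{R}^p$ with $\sum_{j=1}^{p} |x_{n+1,j}| > M$, there exists a vector $(\beta_0,\beta_1,\dots,\beta_p) \in \mathbb{R}^{p+1}$ minimizing $F(\beta_0,\dots,\beta_p) = \sum_{i=1}^{n+1} |y_i - \beta_0 - \sum_{j=1}^{p} \beta_j x_{ij}|$ over $\mathbb{R}^{p+1}$ that satisfies $\beta_0 + \sum_{j=1}^{p} \beta_j x_{n+1,j} = y_{n+1}$, i.e., a LAD regression hyperplane passes through the added point. -/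
lemma lad_exists_minimizer (p n : ℕ) (x : Fin n → Fin p → ℝ) (y : Fin n → ℝ)
    (y' : ℝ) (x' : Fin p → ℝ) :
    ∃ (β0 : ℝ) (β : Fin p → ℝ), ∀ (b0 : ℝ) (b : Fin p → ℝ),
      (∑ i, |y i - β0 - ∑ j, β j * x i j|) + |y' - β0 - ∑ j, β j * x' j| ≤
        (∑ i, |y i - b0 - ∑ j, b j * x i j|) + |y' - b0 - ∑ j, b j * x' j| := by
  classical
  let L : (ℝ × (Fin p → ℝ)) →ₗ[ℝ] ((Fin n → ℝ) × ℝ) :=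
    { toFun := fun b => (fun i => b.1 + ∑ j, b.2 j * x i j, b.1 + ∑ j, b.2 j * x' j)
      map_add' := by
        intro a b
        refine Prod.ext ?_ ?_
        · funext i
          simp only [Prod.mk_add_mk, Prod.fst_add, Prod.snd_add, Pi.add_apply, add_mul,
            Finset.sum_add_distrib]
          ring
        · simp only [Prod.mk_add_mk, Prod.fst_add, Prod.snd_add, Pi.add_apply, add_mul,
            Finset.sum_add_distrib]
          ring
      map_smul' := by
        intro c b
        refine Prod.ext ?_ ?_
        · funext i
          simp only [Prod.smul_mk, Prod.smul_fst, Prod.smul_snd, Pi.smul_apply,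
            smul_eq_mul, RingHom.id_apply, Finset.mul_sum, mul_add]
          ring
        · simp only [Prod.smul_mk, Prod.smul_fst, Prod.smul_snd, Pi.smul_apply,
            smul_eq_mul, RingHom.id_apply, Finset.mul_sum, mul_add]
          ring }
  let g : (Fin n → ℝ) × ℝ → ℝ := fun w => (∑ i, |y i - w.1 i|) + |y' - w.2|
  have hgcont : Continuous g := by
    apply Continuous.add
    · exact continuous_finset_sum _ fun i _ =>
        ((continuous_const.sub ((continuous_apply i).comp continuous_fst)).abs)
    · exact (continuous_const.sub continuous_snd).abs
  have hterm1 : ∀ (w : (Fin n → ℝ) × ℝ) (i : Fin n), |y i - w.1 i| ≤ g w := by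
    intro w i
    have h1 : |y i - w.1 i| ≤ ∑ i, |y i - w.1 i| :=
      Finset.single_le_sum (f := fun i => |y i - w.1 i|) (fun i _ => abs_nonneg _) (Finset.mem_univ i)
    have : (0:ℝ) ≤ |y' - w.2| := abs_nonneg _
    simpa [g] using le_add_of_le_of_nonneg h1 this
  have hterm2 : ∀ (w : (Fin n → ℝ) × ℝ), |y' - w.2| ≤ g w := by
    intro w
    have h : (0:ℝ) ≤ ∑ i, |y i - w.1 i| :=
      Finset.sum_nonneg fun i _ => abs_nonneg _
    simp only [g]
    linarith
  set R : ℝ := 2 * ((∑ i, |y i|) + |y'|) with hR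
  have hg0 : g 0 = (∑ i, |y i|) + |y'| := by simp [g]
  let K : Set ((Fin n → ℝ) × ℝ) := {w | w ∈ (LinearMap.range L : Set ((Fin n → ℝ) × ℝ)) ∧ g w ≤ g 0}
  have hKclosed : IsClosed K := by
    have h1 : IsClosed ((LinearMap.range L : Submodule ℝ ((Fin n → ℝ) × ℝ)) : Set ((Fin n → ℝ) × ℝ)) :=
      Submodule.closed_of_finiteDimensional _
    exact h1.inter (isClosed_le hgcont continuous_const)
  have hKsub : K ⊆ (Set.univ.pi fun _ : Fin n => Set.Icc (-R) R) ×ˢ Set.Icc (-R) R := by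
    intro w hw
    have hwg : g w ≤ g 0 := hw.2
    constructor
    · intro i _
      have h1 : |w.1 i| ≤ |y i - w.1 i| + |y i| := by
        have := abs_sub_abs_le_abs_sub (w.1 i) (y i)
        have h2 : |w.1 i - y i| = |y i - w.1 i| := abs_sub_comm _ _
        linarith [abs_nonneg (y i), abs_nonneg (w.1 i), abs_sub_abs_le_abs_sub (w.1 i) (y i), h2 ▸ abs_sub_abs_le_abs_sub (w.1 i) (y i)]
      have h3 : |y i| ≤ ∑ i, |y i| :=
        Finset.single_le_sum (f := fun i => |y i|) (fun i _ => abs_nonneg _) (Finset.mem_univ i)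
      have h4 : |w.1 i| ≤ R := by
        have := hterm1 w i
        rw [hg0] at hwg
        have : |w.1 i| ≤ g w + |y i| := le_trans h1 (by linarith [hterm1 w i])
        have hy : (0:ℝ) ≤ |y'| := abs_nonneg _
        rw [hR]; linarith
      exact abs_le.mp h4
    · have h1 : |w.2| ≤ |y' - w.2| + |y'| := by
        have h2 : |w.2 - y'| = |y' - w.2| := abs_sub_comm _ _
        linarith [h2 ▸ abs_sub_abs_le_abs_sub (w.2) y']
      have h4 : |w.2| ≤ R := by
        rw [hg0] at hwg
        have hy : (0:ℝ) ≤ ∑ i, |y i| := Finset.sum_nonneg fun i _ => abs_nonneg _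
        have := hterm2 w
        rw [hR]; linarith
      exact abs_le.mp h4
  have hKcompact : IsCompact K := by
    refine IsCompact.of_isClosed_subset ?_ hKclosed hKsub
    exact (isCompact_univ_pi fun _ => isCompact_Icc).prod isCompact_Icc
  have hKne : K.Nonempty := ⟨0, ⟨Submodule.zero_mem _, le_rfl⟩⟩
  obtain ⟨w, hwK, hmin⟩ := hKcompact.exists_isMinOn hKne hgcont.continuousOn
  obtain ⟨b, hb⟩ := hwK.1
  refine ⟨b.1, b.2, ?_⟩
  intro b0 bb
  have key : g w ≤ g (L (b0, bb)) := by
    by_cases hcase : g (L (b0, bb)) ≤ g 0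
    · exact hmin ⟨LinearMap.mem_range_self L _, hcase⟩
    · exact le_trans hwK.2 (le_of_not_ge hcase)
  have e1 : g (L b) = (∑ i, |y i - b.1 - ∑ j, b.2 j * x i j|) + |y' - b.1 - ∑ j, b.2 j * x' j| := by
    simp [g, L, sub_sub]
  have e2 : g (L (b0, bb)) = (∑ i, |y i - b0 - ∑ j, bb j * x i j|) + |y' - b0 - ∑ j, bb j * x' j| := by
    simp [g, L, sub_sub]
  rw [← e1, ← e2, hb]
  exact key

/-- For fixed `y'`, if `∑ j |x' j|` is sufficiently large then some LAD
regression hyperplane for the augmented data set in `ℝ^(p+1)` passes through the added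
point `(x', y')`. -/
theorem lad_hyperplane_through_horizontal_leverage_point
    (p n : ℕ) (hp : 1 ≤ p) (x : Fin n → Fin p → ℝ) (y : Fin n → ℝ) (y' : ℝ) :
    ∃ M > 0, ∀ x' : Fin p → ℝ, M < ∑ j, |x' j| →
      ∃ (β0 : ℝ) (β : Fin p → ℝ),
        (∀ (b0 : ℝ) (b : Fin p → ℝ),
          (∑ i, |y i - β0 - ∑ j, β j * x i j|) + |y' - β0 - ∑ j, β j * x' j| ≤
            (∑ i, |y i - b0 - ∑ j, b j * x i j|) + |y' - b0 - ∑ j, b j * x' j|) ∧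
        β0 + ∑ j, β j * x' j = y' := by
  classical
  set C : ℝ := ∑ i, ∑ j, |x i j| with hC
  have hC0 : 0 ≤ C := Finset.sum_nonneg fun i _ => Finset.sum_nonneg fun j _ => abs_nonneg _
  refine ⟨C + 1, by linarith, ?_⟩
  intro x' hM
  set S : ℝ := ∑ j, |x' j| with hS
  have hS0 : 0 < S := lt_trans (by linarith) hM
  obtain ⟨β0, β, hmin⟩ := lad_exists_minimizer p n x y y' x'
  -- sign vector
  set e : Fin p → ℝ := fun j => if 0 ≤ x' j then 1 else -1 with he
  have hex : ∀ j, e j * x' j = |x' j| := by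
    intro j
    by_cases h : 0 ≤ x' j
    · simp [he, h, abs_of_nonneg h]
    · simp [he, h, abs_of_neg (lt_of_not_ge h)]
  have heb : ∀ j, |e j| = 1 := by
    intro j; by_cases h : 0 ≤ x' j <;> simp [he, h]
  set r' : ℝ := y' - β0 - ∑ j, β j * x' j with hr'
  set δ : ℝ := r' / S with hδ
  refine ⟨β0, fun j => β j + δ * e j, ?_, ?_⟩
  · intro b0 b
    have hnew0 : y' - β0 - ∑ j, (β j + δ * e j) * x' j = 0 := by
      have h1 : ∑ j, (β j + δ * e j) * x' j
          = (∑ j, β j * x' j) + δ * ∑ j, e j * x' j := by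
        rw [Finset.mul_sum, ← Finset.sum_add_distrib]
        congr 1; funext j; ring
      have h2 : ∑ j, e j * x' j = S := by
        rw [hS]; exact Finset.sum_congr rfl fun j _ => hex j
      rw [h1, h2, hδ, div_mul_cancel₀ _ (ne_of_gt hS0)]
      rw [hr']; ring
    have hstep : ∀ i, |y i - β0 - ∑ j, (β j + δ * e j) * x i j|
        ≤ |y i - β0 - ∑ j, β j * x i j| + |δ| * ∑ j, |x i j| := by
      intro i
      have h1 : y i - β0 - ∑ j, (β j + δ * e j) * x i j
          = (y i - β0 - ∑ j, β j * x i j) - δ * ∑ j, e j * x i j := by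
        have h0 : ∑ j, (β j + δ * e j) * x i j
            = (∑ j, β j * x i j) + δ * ∑ j, e j * x i j := by
          rw [Finset.mul_sum, ← Finset.sum_add_distrib]
          congr 1; funext j; ring
        rw [h0]; ring
      rw [h1]
      refine le_trans (abs_sub _ _) ?_
      gcongr
      rw [abs_mul]
      gcongr
      refine le_trans (Finset.abs_sum_le_sum_abs _ _) ?_
      refine Finset.sum_le_sum fun j _ => ?_
      rw [abs_mul, heb j, one_mul]
    have hsum : ∑ i, |y i - β0 - ∑ j, (β j + δ * e j) * x i j|
        ≤ (∑ i, |y i - β0 - ∑ j, β j * x i j|) + |δ| * C := by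
      calc ∑ i, |y i - β0 - ∑ j, (β j + δ * e j) * x i j|
          ≤ ∑ i, (|y i - β0 - ∑ j, β j * x i j| + |δ| * ∑ j, |x i j|) :=
            Finset.sum_le_sum fun i _ => hstep i
        _ = (∑ i, |y i - β0 - ∑ j, β j * x i j|) + |δ| * C := by
            rw [Finset.sum_add_distrib, hC, Finset.mul_sum]
    have hgain : |δ| * C ≤ |r'| := by
      have h1 : |r'| = |δ| * S := by
        rw [hδ, abs_div, abs_of_pos hS0, div_mul_cancel₀ _ (ne_of_gt hS0)]
      rw [h1]
      exact mul_le_mul_of_nonneg_left (by linarith) (abs_nonneg _)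
    calc (∑ i, |y i - β0 - ∑ j, (β j + δ * e j) * x i j|)
          + |y' - β0 - ∑ j, (β j + δ * e j) * x' j|
        ≤ ((∑ i, |y i - β0 - ∑ j, β j * x i j|) + |δ| * C) + 0 := by
          rw [hnew0, abs_zero]
          simpa using hsum
      _ ≤ (∑ i, |y i - β0 - ∑ j, β j * x i j|) + |r'| := by linarith
      _ = (∑ i, |y i - β0 - ∑ j, β j * x i j|) + |y' - β0 - ∑ j, β j * x' j| := by
          rw [hr']
      _ ≤ (∑ i, |y i - b0 - ∑ j, b j * x i j|) + |y' - b0 - ∑ j, b j * x' j| :=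
          hmin b0 b
  · have h1 : ∑ j, (β j + δ * e j) * x' j
        = (∑ j, β j * x' j) + δ * ∑ j, e j * x' j := by
      rw [Finset.mul_sum, ← Finset.sum_add_distrib]
      congr 1; funext j; ring
    have h2 : ∑ j, e j * x' j = S := by
      rw [hS]; exact Finset.sum_congr rfl fun j _ => hex j
    rw [h1, h2, hδ, div_mul_cancel₀ _ (ne_of_gt hS0), hr']
    ring
end
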